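/- arXiv:1412.2196 — 2 statements merged into one kernel-verified Lean document; each statement's English description precedes it below -/
import Mathlib

section
/- The optimal value of min_{Z,E} rank(Z) + λf(E) subject to X − E = (X − E)Z equals min_E [rank(X − E) + λf(E)]; i.e., the original R-LRR is equivalent to the original R-PCA after eliminating Z. -/
open Matrix

def IsMoorePenrose {m n : ℕ} (A : Matrix (Fin m) (Fin n) ℝ) (B : Matrix (Fin n) (Fin m) ℝ) : Prop :=
  A * B * A = A ∧ B * A * B = B ∧ (A * B)ᵀ = A * B ∧ (B * A)ᵀ = B * A

noncomputable def nuclearNorm {p q : ℕ} (M : Matrix (Fin p) (Fin q) ℝ) : ℝ :=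
  ∑ i, Real.sqrt ((show (Mᵀ * M).IsHermitian by simpa using Matrix.isHermitian_conjTranspose_mul_self M).eigenvalues i)

/-!
If `A = A * Z` then `rank A ≤ rank Z`. Conversely, a linear section `g` of the corestriction
`A : Kⁿ → range A` gives the endomorphism `p = g ∘ A` with `A ∘ p = A` and `rank p = rank A`.
So for each `E` the inner minimum over `Z` is exactly `rank (X - E)`, and the two sets of
objective values dominate each other from below; that forces equal infima even in the unbounded
case, where `Real.sInf` is `0` on both sides.
-/
theorem LinearMap.exists_comp_eq_self_and_finrank_range_eq {K V W : Type*} [DivisionRing K]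
    [AddCommGroup V] [Module K V] [AddCommGroup W] [Module K W] (f : V →ₗ[K] W) :
    ∃ p : V →ₗ[K] V, f ∘ₗ p = f ∧ Module.finrank K (range p) = Module.finrank K (range f) := by
  obtain ⟨g, hg⟩ := f.rangeRestrict.exists_rightInverse_of_surjective f.range_rangeRestrict
  have hg_inj : Function.Injective g :=
    Function.LeftInverse.injective (g := f.rangeRestrict) (LinearMap.congr_fun hg)
  refine ⟨g ∘ₗ f.rangeRestrict, ?_, ?_⟩
  · calc f ∘ₗ g ∘ₗ f.rangeRestrict
        = (range f).subtype ∘ₗ (f.rangeRestrict ∘ₗ g) ∘ₗ f.rangeRestrict := rfl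
      _ = f := by rw [hg]; rfl
  · rw [range_comp_of_range_eq_top g f.range_rangeRestrict, finrank_range_of_inj hg_inj]

theorem Matrix.exists_mul_eq_self_and_rank_eq {K m n : Type*} [Field K] [Fintype m] [Fintype n]
    [DecidableEq n] (A : Matrix m n K) : ∃ Z : Matrix n n K, A * Z = A ∧ Z.rank = A.rank := by
  obtain ⟨p, hAp, hrank⟩ := A.mulVecLin.exists_comp_eq_self_and_finrank_range_eq
  have hp : (LinearMap.toMatrix' p).mulVecLin = p := toLin'_toMatrix' p
  refine ⟨LinearMap.toMatrix' p, toLin'.injective ?_, ?_⟩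
  · rw [toLin'_apply', toLin'_apply', mulVecLin_mul, hp, hAp]
  · rw [rank, hp, hrank, rank]

theorem stmt_17_general {m n : ℕ} (X : Matrix (Fin m) (Fin n) ℝ) (lam : ℝ)
    (f : Matrix (Fin m) (Fin n) ℝ → ℝ) :
    sInf {c : ℝ | ∃ (Z : Matrix (Fin n) (Fin n) ℝ) (E : Matrix (Fin m) (Fin n) ℝ),
        X - E = (X - E) * Z ∧ c = (Z.rank : ℝ) + lam * f E}
      = sInf {c : ℝ | ∃ E : Matrix (Fin m) (Fin n) ℝ,
        c = ((X - E).rank : ℝ) + lam * f E} := by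
  apply csInf_eq_csInf_of_forall_exists_le
  · rintro _ ⟨Z, E, hZ, rfl⟩
    have hrank : (X - E).rank ≤ Z.rank := hZ ▸ rank_mul_le_right (X - E) Z
    exact ⟨_, ⟨E, rfl⟩, by gcongr⟩
  · rintro _ ⟨E, rfl⟩
    obtain ⟨Z, hZ, hrank⟩ := (X - E).exists_mul_eq_self_and_rank_eq
    exact ⟨_, ⟨Z, E, hZ.symm, rfl⟩, by rw [hrank]⟩

theorem stmt_17 {m n : ℕ} (X : Matrix (Fin m) (Fin n) ℝ) (lam : ℝ) (hlam : 0 < lam)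
    (f : Matrix (Fin m) (Fin n) ℝ → ℝ) :
    sInf {c : ℝ | ∃ (Z : Matrix (Fin n) (Fin n) ℝ) (E : Matrix (Fin m) (Fin n) ℝ),
        X - E = (X - E) * Z ∧ c = (Z.rank : ℝ) + lam * f E}
      = sInf {c : ℝ | ∃ E : Matrix (Fin m) (Fin n) ℝ,
        c = ((X - E).rank : ℝ) + lam * f E} :=
  stmt_17_general X lam f
end

section
/- Let X = UΣVᵀ be the SVD of X and r = argmin_k (k + λΣ_{i>k} σ_i²). Then (Z*, A*) with A* = U₁Σ₁V₁ᵀ (top-r truncated SVD) and Z* = V₁V₁ᵀ is an optimal solution of min_{A,Z} ‖Z‖_* + λ‖X − A‖_F² subject to A = AZ. -/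
open Matrix

def frobSq {p q : ℕ} (M : Matrix (Fin p) (Fin q) ℝ) : ℝ := ∑ i, ∑ j, (M i j) ^ 2

noncomputable def truncS (m n : ℕ) (σ : Fin (min m n) → ℝ) (k : ℕ) : Matrix (Fin m) (Fin n) ℝ :=
  Matrix.of fun i j =>
    if h : (i : ℕ) = (j : ℕ) ∧ (i : ℕ) < k then
      σ ⟨i, lt_min i.isLt (by rw [h.1]; exact j.isLt)⟩ else 0

noncomputable def tailSum (m n : ℕ) (σ : Fin (min m n) → ℝ) (k : ℕ) : ℝ :=
  ∑ i ∈ Finset.univ.filter (fun i : Fin (min m n) => k ≤ (i : ℕ)), σ i ^ 2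

/-!
If `A = A Z`, let `P` be the orthogonal projection onto the row space of `A` and `k = tr P`.
Then `P Z = P`, and computing `tr P = tr (P Z)` in an eigenbasis of `Zᵀ Z` gives `k ≤ ‖Z‖_*`.
On the other side `‖X - A‖_F² ≥ ‖X (1 - P)‖_F² = ∑ⱼ σⱼ² (1 - tⱼ)` with `tⱼ = vⱼᵀ P vⱼ ∈ [0, 1]`
summing to `k`, and this is at least `∑_{j ≥ k} σⱼ²` since the `σⱼ` decrease. Hence the objective is
at least `k + λ ∑_{j ≥ k} σⱼ² ≥ r + λ ∑_{j ≥ r} σⱼ²`, which `(A*, Z*)` attains: `Z*` is a projection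
of rank `r` and `X - A*` keeps exactly the singular values beyond `r`.
-/

open Finset

lemma Matrix.star_eq_transpose {ι : Type*} (M : Matrix ι ι ℝ) : star M = Mᵀ := by
  rw [star_eq_conjTranspose, conjTranspose_eq_transpose_of_trivial]

lemma Matrix.dotProduct_transpose_mul_self_mulVec {ι κ : Type*} [Fintype ι] [Fintype κ]
    (Z : Matrix κ ι ℝ) (v : ι → ℝ) : v ⬝ᵥ (Zᵀ * Z) *ᵥ v = (Z *ᵥ v) ⬝ᵥ (Z *ᵥ v) := by
  rw [← mulVec_mulVec, dotProduct_mulVec, vecMul_transpose]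

lemma Matrix.dotProduct_le_sqrt_mul_sqrt {ι : Type*} [Fintype ι] (x y : ι → ℝ) :
    x ⬝ᵥ y ≤ √(x ⬝ᵥ x) * √(y ⬝ᵥ y) := by
  simpa [dotProduct, sq] using Real.sum_mul_le_sqrt_mul_sqrt univ x y

section Orthogonal

variable {ι : Type*} [Fintype ι] [DecidableEq ι] {W : Matrix ι ι ℝ}

lemma Matrix.dotProduct_transpose_self_of_orthogonal (hW : Wᵀ * W = 1) (i : ι) :
    Wᵀ i ⬝ᵥ Wᵀ i = 1 := by
  have := congrFun (congrFun hW i) i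
  rwa [mul_apply', one_apply_eq] at this

lemma Matrix.trace_eq_sum_dotProduct_mulVec_of_orthogonal (hW : Wᵀ * W = 1) (M : Matrix ι ι ℝ) :
    M.trace = ∑ i, Wᵀ i ⬝ᵥ M *ᵥ Wᵀ i := by
  calc M.trace = (Wᵀ * M * W).trace := by
        rw [trace_mul_cycle, mul_eq_one_comm.mp hW, Matrix.one_mul]
    _ = _ := by simp only [trace, Matrix.diag, mul_mul_apply]

end Orthogonal

section StarProjection

variable {ι : Type*} [Fintype ι] {P : Matrix ι ι ℝ}

lemma IsStarProjection.transpose_eq (hP : IsStarProjection P) : Pᵀ = P := by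
  rw [← star_eq_transpose, hP.isSelfAdjoint.star_eq]

lemma IsStarProjection.dotProduct_mulVec_eq (hP : IsStarProjection P) (v : ι → ℝ) :
    v ⬝ᵥ P *ᵥ v = (P *ᵥ v) ⬝ᵥ (P *ᵥ v) := by
  rw [← dotProduct_transpose_mul_self_mulVec, hP.transpose_eq, hP.isIdempotentElem.eq]

lemma IsStarProjection.dotProduct_mulVec_nonneg (hP : IsStarProjection P) (v : ι → ℝ) :
    0 ≤ v ⬝ᵥ P *ᵥ v := by
  rw [hP.dotProduct_mulVec_eq]
  exact dotProduct_star_self_nonneg (P *ᵥ v)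

variable [DecidableEq ι]

lemma IsStarProjection.orthogonal_mul_mul_transpose (hP : IsStarProjection P) {V : Matrix ι ι ℝ}
    (hV : Vᵀ * V = 1) : IsStarProjection (V * P * Vᵀ) where
  isIdempotentElem := by
    rw [IsIdempotentElem, Matrix.mul_assoc, Matrix.mul_assoc, ← Matrix.mul_assoc Vᵀ,
      ← Matrix.mul_assoc Vᵀ, hV, Matrix.one_mul, ← Matrix.mul_assoc P, hP.isIdempotentElem.eq,
      Matrix.mul_assoc]
  isSelfAdjoint := by
    rw [IsSelfAdjoint, star_eq_transpose, transpose_mul, transpose_mul, transpose_transpose,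
      hP.transpose_eq, Matrix.mul_assoc]

lemma IsStarProjection.dotProduct_mulVec_le (hP : IsStarProjection P) (v : ι → ℝ) :
    v ⬝ᵥ P *ᵥ v ≤ v ⬝ᵥ v := by
  have := hP.one_sub.dotProduct_mulVec_nonneg v
  rwa [sub_mulVec, one_mulVec, dotProduct_sub, sub_nonneg] at this

lemma Matrix.IsHermitian.eigenvalues_eq_zero_or_one {𝕜 : Type*} [RCLike 𝕜] {A : Matrix ι ι 𝕜}
    (hA : A.IsHermitian) (h : IsIdempotentElem A) (i : ι) :
    hA.eigenvalues i = 0 ∨ hA.eigenvalues i = 1 :=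
  h.spectrum_subset ℝ (hA.eigenvalues_mem_spectrum_real i)

lemma IsStarProjection.exists_trace_eq_natCast (hP : IsStarProjection P) :
    ∃ k : ℕ, P.trace = k := by
  have hH : P.IsHermitian := hP.isSelfAdjoint.isHermitian
  refine ⟨#{i | hH.eigenvalues i = 1}, ?_⟩
  rw [hH.trace_eq_sum_eigenvalues, natCast_card_filter]
  refine sum_congr rfl fun i _ => ?_
  rcases hH.eigenvalues_eq_zero_or_one hP.isIdempotentElem i with h | h <;> simp [h]

lemma Matrix.exists_isStarProjection_mul_eq {κ : Type*} [Fintype κ] (A : Matrix κ ι ℝ) :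
    ∃ P : Matrix ι ι ℝ, IsStarProjection P ∧ A * P = A ∧ ∀ Z, A * Z = A → P * Z = P := by
  set G := Aᵀ * A
  have hG : IsSelfAdjoint G := by
    simpa using (isHermitian_conjTranspose_mul_self A).isSelfAdjoint
  have hcont (f : ℝ → ℝ) : ContinuousOn f (spectrum ℝ G) := finite_real_spectrum.continuousOn f
  -- the projection onto the range of `G`, i.e. onto the row space of `A`
  obtain ⟨P, hPdef⟩ : ∃ P, P = cfc (fun x : ℝ => x * x⁻¹) G := ⟨_, rfl⟩
  have hP : IsStarProjection P :=
    { isIdempotentElem := by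
        rw [IsIdempotentElem, hPdef, ← cfc_mul _ _ G (hcont _) (hcont _)]
        refine cfc_congr fun x _ => ?_
        by_cases hx : x = 0 <;> simp [hx]
      isSelfAdjoint := hPdef ▸ cfc_predicate _ G }
  have hP_factor : P = G * cfc (fun x : ℝ => x⁻¹) G := by
    rw [hPdef, cfc_mul (fun x : ℝ => x) (fun x => x⁻¹) G (hcont _) (hcont _), cfc_id' ℝ G]
  have hGP : G * P = G := by
    rw [hPdef]
    nth_rewrite 1 [← cfc_id' ℝ G]
    rw [← cfc_mul _ _ G (hcont _) (hcont _)]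
    conv_rhs => rw [← cfc_id' ℝ G]
    refine cfc_congr fun x _ => ?_
    by_cases hx : x = 0 <;> simp [hx]
  refine ⟨P, hP, ?_, fun Z hAZ => ?_⟩
  · have h : (A * (1 - P))ᴴ * (A * (1 - P)) = 0 := by
      rw [conjTranspose_eq_transpose_of_trivial, transpose_mul, transpose_sub, transpose_one,
        hP.transpose_eq, Matrix.mul_assoc, ← Matrix.mul_assoc Aᵀ, Matrix.mul_sub, Matrix.mul_one,
        hGP, sub_self, Matrix.mul_zero]
    rw [conjTranspose_mul_self_eq_zero, Matrix.mul_sub, Matrix.mul_one, sub_eq_zero] at h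
    exact h.symm
  · have hZG : Zᵀ * G = G := by rw [← Matrix.mul_assoc, ← transpose_mul, hAZ]
    have hZP : Zᵀ * P = P := by rw [hP_factor, ← Matrix.mul_assoc, hZG]
    calc P * Z = (Zᵀ * P)ᵀ := by rw [transpose_mul, transpose_transpose, hP.transpose_eq]
      _ = P := by rw [hZP, hP.transpose_eq]

end StarProjection

lemma IsStarProjection.nuclearNorm_eq_trace {p : ℕ} {P : Matrix (Fin p) (Fin p) ℝ}
    (hP : IsStarProjection P) : nuclearNorm P = P.trace := by
  have hPP : Pᵀ * P = P := by rw [hP.transpose_eq, hP.isIdempotentElem.eq]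
  have hH : (Pᵀ * P).IsHermitian := by simpa using isHermitian_conjTranspose_mul_self P
  have hidem : IsIdempotentElem (Pᵀ * P) := by rw [IsIdempotentElem, hPP]; exact hP.isIdempotentElem
  calc nuclearNorm P = ∑ i, √(hH.eigenvalues i) := rfl
    _ = ∑ i, hH.eigenvalues i := sum_congr rfl fun i _ => by
      rcases hH.eigenvalues_eq_zero_or_one hidem i with h | h <;> simp [h]
    _ = P.trace := by simpa [hPP] using hH.trace_eq_sum_eigenvalues.symm

lemma IsStarProjection.trace_le_nuclearNorm {p : ℕ} {P Z : Matrix (Fin p) (Fin p) ℝ}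
    (hP : IsStarProjection P) (hPZ : P * Z = P) : P.trace ≤ nuclearNorm Z := by
  have hH : (Zᵀ * Z).IsHermitian := by simpa using isHermitian_conjTranspose_mul_self Z
  set W : Matrix (Fin p) (Fin p) ℝ := (hH.eigenvectorUnitary : Matrix (Fin p) (Fin p) ℝ)
  have hW : Wᵀ * W = 1 := by rw [← star_eq_transpose]; exact Unitary.coe_star_mul_self _
  have hZw (i) : (Z *ᵥ Wᵀ i) ⬝ᵥ (Z *ᵥ Wᵀ i) = hH.eigenvalues i := by
    rw [← dotProduct_transpose_mul_self_mulVec,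
      show Wᵀ i = hH.eigenvectorBasis i from rfl, hH.mulVec_eigenvectorBasis, dotProduct_smul,
      show ⇑(hH.eigenvectorBasis i) = Wᵀ i from rfl, dotProduct_transpose_self_of_orthogonal hW,
      smul_eq_mul, mul_one]
  have hPw (i) : √((P *ᵥ Wᵀ i) ⬝ᵥ (P *ᵥ Wᵀ i)) ≤ 1 := by
    rw [← hP.dotProduct_mulVec_eq, Real.sqrt_le_one, ← dotProduct_transpose_self_of_orthogonal hW i]
    exact hP.dotProduct_mulVec_le _
  calc P.trace = (P * Z).trace := by rw [hPZ]
    _ = ∑ i, (P *ᵥ Wᵀ i) ⬝ᵥ (Z *ᵥ Wᵀ i) := by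
      rw [trace_eq_sum_dotProduct_mulVec_of_orthogonal hW]
      refine sum_congr rfl fun i _ => ?_
      rw [← mulVec_mulVec, dotProduct_mulVec, ← mulVec_transpose, hP.transpose_eq]
    _ ≤ ∑ i, √((P *ᵥ Wᵀ i) ⬝ᵥ (P *ᵥ Wᵀ i)) * √(hH.eigenvalues i) :=
      sum_le_sum fun i _ => hZw i ▸ dotProduct_le_sqrt_mul_sqrt _ _
    _ ≤ ∑ i, √(hH.eigenvalues i) :=
      sum_le_sum fun i _ => mul_le_of_le_one_left (Real.sqrt_nonneg _) (hPw i)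

section FrobeniusNorm

variable {p q : ℕ}

lemma frobSq_nonneg (M : Matrix (Fin p) (Fin q) ℝ) : 0 ≤ frobSq M :=
  sum_nonneg fun _ _ => sum_nonneg fun _ _ => sq_nonneg _

lemma frobSq_eq_trace (M : Matrix (Fin p) (Fin q) ℝ) : frobSq M = (Mᵀ * M).trace := by
  rw [frobSq, sum_comm]
  simp [trace, mul_apply, sq]

lemma frobSq_orthogonal_mul {U : Matrix (Fin p) (Fin p) ℝ} (hU : Uᵀ * U = 1)
    (M : Matrix (Fin p) (Fin q) ℝ) : frobSq (U * M) = frobSq M := by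
  rw [frobSq_eq_trace, frobSq_eq_trace, transpose_mul, Matrix.mul_assoc, ← Matrix.mul_assoc Uᵀ,
    hU, Matrix.one_mul]

lemma frobSq_mul_transpose_orthogonal {V : Matrix (Fin q) (Fin q) ℝ} (hV : Vᵀ * V = 1)
    (M : Matrix (Fin p) (Fin q) ℝ) : frobSq (M * Vᵀ) = frobSq M := by
  rw [frobSq_eq_trace, frobSq_eq_trace, transpose_mul, transpose_transpose, Matrix.mul_assoc,
    trace_mul_comm, Matrix.mul_assoc, Matrix.mul_assoc, hV, Matrix.mul_one]

lemma frobSq_mul_isStarProjection {P : Matrix (Fin q) (Fin q) ℝ} (hP : IsStarProjection P)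
    (M : Matrix (Fin p) (Fin q) ℝ) : frobSq (M * P) = (Mᵀ * M * P).trace := by
  rw [frobSq_eq_trace, transpose_mul, hP.transpose_eq, Matrix.mul_assoc, trace_mul_comm,
    Matrix.mul_assoc, Matrix.mul_assoc, hP.isIdempotentElem.eq, Matrix.mul_assoc]

lemma frobSq_eq_add_of_isStarProjection {P : Matrix (Fin q) (Fin q) ℝ} (hP : IsStarProjection P)
    (M : Matrix (Fin p) (Fin q) ℝ) : frobSq M = frobSq (M * P) + frobSq (M * (1 - P)) := by
  rw [frobSq_mul_isStarProjection hP, frobSq_mul_isStarProjection hP.one_sub, ← trace_add,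
    ← Matrix.mul_add, add_sub_cancel, Matrix.mul_one, frobSq_eq_trace]

end FrobeniusNorm

lemma sum_mul_le_sum_filter_lt {n k : ℕ} {d t : Fin n → ℝ} (hd : Antitone d)
    (hd0 : ∀ i, 0 ≤ d i) (ht0 : ∀ i, 0 ≤ t i) (ht1 : ∀ i, t i ≤ 1) (hk : ∑ i, t i ≤ k) :
    ∑ i, d i * t i ≤ ∑ i with i.val < k, d i := by
  -- `c` separates the `k` largest entries of `d` from the others: `(d i - c) (t i - [i < k]) ≤ 0`
  set c := if h : k < n then d ⟨k, h⟩ else 0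
  have key (i : Fin n) : d i * t i ≤
      (if (i : ℕ) < k then d i else 0) + c * (t i - if (i : ℕ) < k then 1 else 0) := by
    by_cases hik : (i : ℕ) < k
    · have hci : c ≤ d i := by
        unfold c; split_ifs with h
        · exact hd (Fin.mk_le_of_le_val hik.le)
        · exact hd0 i
      simp only [if_pos hik]
      nlinarith [mul_nonneg (sub_nonneg.2 hci) (sub_nonneg.2 (ht1 i))]
    · have hkn : k < n := by omega
      have hic : d i ≤ c := by
        simp only [c, dif_pos hkn]
        exact hd (Fin.le_def.mpr (by simpa using hik))
      simp only [if_neg hik]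
      nlinarith [mul_nonneg (sub_nonneg.2 hic) (ht0 i)]
  have hcard : c * (∑ i, t i - (min n k : ℕ)) ≤ 0 := by
    unfold c; split_ifs with h
    · exact mul_nonpos_of_nonneg_of_nonpos (hd0 _) (by rw [min_eq_right h.le]; linarith)
    · simp
  calc ∑ i, d i * t i
      ≤ ∑ i : Fin n,
          ((if (i : ℕ) < k then d i else 0) + c * (t i - if (i : ℕ) < k then 1 else 0)) :=
        sum_le_sum fun i _ => key i
    _ = ∑ i with i.val < k, d i + c * (∑ i, t i - (min n k : ℕ)) := by
      rw [sum_add_distrib, ← mul_sum, sum_sub_distrib, ← sum_filter, sum_boole,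
        Fin.card_filter_val_lt]
    _ ≤ _ := by linarith

lemma sum_filter_le_frobSq_sub {m n k : ℕ} {X A : Matrix (Fin m) (Fin n) ℝ}
    {V P : Matrix (Fin n) (Fin n) ℝ} {d : Fin n → ℝ} (hV : Vᵀ * V = 1) (hd : Antitone d)
    (hd0 : ∀ j, 0 ≤ d j) (hX : Xᵀ * X = V * diagonal d * Vᵀ) (hP : IsStarProjection P)
    (hAP : A * P = A) (hk : P.trace = k) :
    ∑ j with k ≤ j.val, d j ≤ frobSq (X - A) := by
  set t : Fin n → ℝ := fun j => Vᵀ j ⬝ᵥ P *ᵥ Vᵀ j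
  have ht1 (j : Fin n) : t j ≤ 1 :=
    (hP.dotProduct_mulVec_le _).trans_eq (dotProduct_transpose_self_of_orthogonal hV j)
  have ht_sum : ∑ j, t j = k := by rw [← hk, trace_eq_sum_dotProduct_mulVec_of_orthogonal hV]
  have hX_sum : frobSq X = ∑ j, d j := by
    rw [frobSq_eq_trace, hX, trace_mul_cycle, hV, Matrix.one_mul, trace_diagonal]
  have hXP_sum : frobSq (X * P) = ∑ j, d j * t j := by
    rw [frobSq_mul_isStarProjection hP, hX, Matrix.mul_assoc, Matrix.mul_assoc, trace_mul_comm,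
      Matrix.mul_assoc]
    simp only [trace, Matrix.diag, diagonal_mul, mul_mul_apply, t]
  have hXA : (X - A) * (1 - P) = X * (1 - P) := by
    rw [Matrix.sub_mul, Matrix.mul_sub A, Matrix.mul_one, hAP, sub_self, sub_zero]
  have hbathtub := sum_mul_le_sum_filter_lt hd hd0 (fun j => hP.dotProduct_mulVec_nonneg _) ht1
    ht_sum.le
  calc ∑ j with k ≤ j.val, d j = ∑ j, d j - ∑ j with j.val < k, d j := by
        rw [← sum_filter_not_add_sum_filter univ (fun j : Fin n => j.val < k)]
        simp only [not_lt, add_sub_cancel_right]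
    _ ≤ frobSq X - frobSq (X * P) := by rw [hX_sum, hXP_sum]; linarith
    _ = frobSq ((X - A) * (1 - P)) := by
      rw [hXA, frobSq_eq_add_of_isStarProjection hP X]; ring
    _ ≤ frobSq (X - A) := by
      linarith [frobSq_eq_add_of_isStarProjection hP (X - A), frobSq_nonneg ((X - A) * P)]

lemma exists_natCast_le_nuclearNorm_and_sum_le_frobSq {m n : ℕ} {X A : Matrix (Fin m) (Fin n) ℝ}
    {V Z : Matrix (Fin n) (Fin n) ℝ} {d : Fin n → ℝ} (hV : Vᵀ * V = 1) (hd : Antitone d)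
    (hd0 : ∀ j, 0 ≤ d j) (hX : Xᵀ * X = V * diagonal d * Vᵀ) (hAZ : A * Z = A) :
    ∃ k : ℕ, (k : ℝ) ≤ nuclearNorm Z ∧ ∑ j with k ≤ j.val, d j ≤ frobSq (X - A) := by
  obtain ⟨P, hP, hAP, hPZ⟩ := exists_isStarProjection_mul_eq A
  obtain ⟨k, hk⟩ := hP.exists_trace_eq_natCast
  exact ⟨k, hk ▸ hP.trace_le_nuclearNorm (hPZ Z hAZ),
    sum_filter_le_frobSq_sub hV hd hd0 hX hP hAP hk⟩

noncomputable def singularValue (m n : ℕ) (σ : Fin (min m n) → ℝ) (a : ℕ) : ℝ :=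
  if h : a < min m n then σ ⟨a, h⟩ else 0

def coordProjection (n k : ℕ) : Matrix (Fin n) (Fin n) ℝ :=
  diagonal fun j => if j.val < k then 1 else 0

lemma isStarProjection_coordProjection {n k : ℕ} : IsStarProjection (coordProjection n k) where
  isIdempotentElem := by
    rw [IsIdempotentElem, coordProjection, diagonal_mul_diagonal]
    congr 1
    ext j
    split_ifs <;> simp
  isSelfAdjoint := by rw [IsSelfAdjoint, star_eq_transpose, coordProjection, diagonal_transpose]

lemma trace_coordProjection {n k : ℕ} (h : k ≤ n) : (coordProjection n k).trace = k := by
  rw [coordProjection, trace_diagonal, sum_boole, Fin.card_filter_val_lt, min_eq_right h]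

lemma submatrix_castLE_mul_transpose {n r : ℕ} (V : Matrix (Fin n) (Fin n) ℝ) (h : r ≤ n) :
    V.submatrix id (Fin.castLE h) * (V.submatrix id (Fin.castLE h))ᵀ =
      V * coordProjection n r * Vᵀ := by
  obtain ⟨l, rfl⟩ := Nat.exists_eq_add_of_le h
  ext a b
  rw [mul_apply, mul_apply, Fin.sum_univ_add]
  simp only [coordProjection, mul_diagonal, submatrix_apply, id_eq, transpose_apply,
    Fin.val_castAdd, Fin.is_lt, ↓reduceIte, mul_one, Fin.val_natAdd, add_lt_iff_neg_left,
    not_lt_zero, mul_zero, zero_mul, sum_const_zero, add_zero]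
  rfl

section SVD

variable {m n : ℕ} {σ : Fin (min m n) → ℝ}

lemma singularValue_sq_antitone (hσ0 : ∀ i, 0 ≤ σ i) (hσ : Antitone σ) :
    Antitone fun j : Fin n => singularValue m n σ j ^ 2 := by
  intro i j hij
  simp only [singularValue]
  split_ifs with hj hi hi
  · exact pow_le_pow_left₀ (hσ0 _) (hσ (Fin.mk_le_mk.mpr hij)) 2
  · exact absurd (lt_of_le_of_lt (Fin.le_def.mp hij) hj) hi
  · simpa using sq_nonneg _
  · rfl

lemma truncS_apply (k : ℕ) (i : Fin m) (j : Fin n) :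
    truncS m n σ k i j = if i.val = j.val ∧ j.val < k then singularValue m n σ j else 0 := by
  simp only [truncS, of_apply, singularValue]
  have := i.isLt
  split_ifs with h <;> first | omega | rfl | simp only [h.1]

lemma truncS_eq_mul_coordProjection (k : ℕ) :
    truncS m n σ k = truncS m n σ (min m n) * coordProjection n k := by
  ext i j
  simp only [coordProjection, mul_diagonal, truncS_apply]
  have := i.isLt
  split_ifs <;> first | omega | simp

lemma truncS_mul_coordProjection (k : ℕ) :
    truncS m n σ k * coordProjection n k = truncS m n σ k := by
  rw [truncS_eq_mul_coordProjection, Matrix.mul_assoc,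
    isStarProjection_coordProjection.isIdempotentElem.eq]

lemma transpose_truncS_mul_truncS :
    (truncS m n σ (min m n))ᵀ * truncS m n σ (min m n) =
      diagonal fun j : Fin n => singularValue m n σ j ^ 2 := by
  ext j j'
  simp only [mul_apply, transpose_apply, truncS_apply, diagonal_apply]
  by_cases hjj : j = j'
  · subst hjj
    by_cases hj : j.val < min m n
    · rw [Fintype.sum_eq_single ⟨j.val, by omega⟩ fun i hi => ?_]
      · simp [hj, sq]
      · have : i.val ≠ j.val := fun h => hi (Fin.ext h)
        simp [this]
    · simp [hj, singularValue]
  · rw [if_neg hjj]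
    refine sum_eq_zero fun i _ => ?_
    have : ¬(i.val = j.val ∧ i.val = j'.val) := fun h => hjj (Fin.ext (h.1.symm.trans h.2))
    split_ifs <;> simp_all

lemma tailSum_eq_sum_filter (k : ℕ) :
    tailSum m n σ k = ∑ j : Fin n with k ≤ j.val, singularValue m n σ j ^ 2 := by
  set g : ℕ → ℝ := fun a => if k ≤ a then singularValue m n σ a ^ 2 else 0
  calc tailSum m n σ k = ∑ i : Fin (min m n), g i := by
        rw [tailSum, sum_filter]
        refine sum_congr rfl fun i _ => ?_
        simp only [g, singularValue, dif_pos i.isLt]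
    _ = ∑ a ∈ range (min m n), g a := Fin.sum_univ_eq_sum_range g _
    _ = ∑ a ∈ range n, g a := by
      refine sum_subset (range_subset_range.mpr (min_le_right m n)) fun a _ ha => ?_
      simp only [g, singularValue, dif_neg (mem_range.not.mp ha)]
      simp
    _ = _ := by rw [← Fin.sum_univ_eq_sum_range g, sum_filter]

lemma frobSq_truncS_sub (k : ℕ) :
    frobSq (truncS m n σ (min m n) - truncS m n σ k) = tailSum m n σ k := by
  have hS : truncS m n σ (min m n) - truncS m n σ k =
      truncS m n σ (min m n) * (1 - coordProjection n k) := by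
    rw [truncS_eq_mul_coordProjection k, Matrix.mul_sub, Matrix.mul_one]
  rw [hS, frobSq_mul_isStarProjection isStarProjection_coordProjection.one_sub,
    transpose_truncS_mul_truncS, coordProjection, ← diagonal_one, diagonal_sub,
    diagonal_mul_diagonal, trace_diagonal, tailSum_eq_sum_filter, sum_filter]
  refine sum_congr rfl fun j _ => ?_
  split_ifs <;> first | omega | simp

lemma transpose_mul_self_of_eq_mul_truncS {X : Matrix (Fin m) (Fin n) ℝ}
    {U : Matrix (Fin m) (Fin m) ℝ} {V : Matrix (Fin n) (Fin n) ℝ} (hU : Uᵀ * U = 1)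
    (hX : X = U * truncS m n σ (min m n) * Vᵀ) :
    Xᵀ * X = V * diagonal (fun j : Fin n => singularValue m n σ j ^ 2) * Vᵀ := by
  rw [hX, ← transpose_truncS_mul_truncS]
  simp only [transpose_mul, transpose_transpose, Matrix.mul_assoc]
  rw [← Matrix.mul_assoc Uᵀ U, hU, Matrix.one_mul]

end SVD

theorem stmt_19 {m n : ℕ} (X : Matrix (Fin m) (Fin n) ℝ)
    (U : Matrix (Fin m) (Fin m) ℝ) (V : Matrix (Fin n) (Fin n) ℝ)
    (σ : Fin (min m n) → ℝ)
    (hU : Uᵀ * U = 1) (hV : Vᵀ * V = 1)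
    (hσ0 : ∀ i, 0 ≤ σ i) (hσ : Antitone σ)
    (hX : X = U * truncS m n σ (min m n) * Vᵀ)
    (lam : ℝ) (hlam : 0 < lam)
    (r : ℕ) (hrn : r ≤ n)
    (hr : ∀ k : ℕ, (r : ℝ) + lam * tailSum m n σ r ≤ (k : ℝ) + lam * tailSum m n σ k) :
    let Astar : Matrix (Fin m) (Fin n) ℝ := U * truncS m n σ r * Vᵀ
    let V₁ : Matrix (Fin n) (Fin r) ℝ := V.submatrix id (Fin.castLE hrn)
    let Zstar : Matrix (Fin n) (Fin n) ℝ := V₁ * V₁ᵀ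
    Astar = Astar * Zstar ∧
    ∀ (A : Matrix (Fin m) (Fin n) ℝ) (Z : Matrix (Fin n) (Fin n) ℝ),
      A = A * Z →
      nuclearNorm Zstar + lam * frobSq (X - Astar)
        ≤ nuclearNorm Z + lam * frobSq (X - A) := by
  intro Astar V₁ Zstar
  have hZ : Zstar = V * coordProjection n r * Vᵀ := submatrix_castLE_mul_transpose V hrn
  have hAZ : Astar * Zstar = Astar :=
    calc Astar * Zstar = U * (truncS m n σ r * coordProjection n r) * Vᵀ := by
          rw [hZ]
          simp only [Astar, Matrix.mul_assoc]
          rw [← Matrix.mul_assoc Vᵀ V, hV, Matrix.one_mul]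
      _ = Astar := by rw [truncS_mul_coordProjection]
  have hZ_proj : IsStarProjection Zstar :=
    hZ ▸ isStarProjection_coordProjection.orthogonal_mul_mul_transpose hV
  have hnuc : nuclearNorm Zstar = r := by
    rw [hZ_proj.nuclearNorm_eq_trace, hZ, trace_mul_cycle, hV, Matrix.one_mul,
      trace_coordProjection hrn]
  have hfrob : frobSq (X - Astar) = tailSum m n σ r := by
    rw [hX, ← Matrix.sub_mul, ← Matrix.mul_sub, frobSq_mul_transpose_orthogonal hV,
      frobSq_orthogonal_mul hU, frobSq_truncS_sub]
  refine ⟨hAZ.symm, fun A Z hAZ' => ?_⟩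
  obtain ⟨k, hk, hfrobA⟩ := exists_natCast_le_nuclearNorm_and_sum_le_frobSq hV
    (singularValue_sq_antitone hσ0 hσ) (fun j => sq_nonneg _)
    (transpose_mul_self_of_eq_mul_truncS hU hX) hAZ'.symm
  rw [← tailSum_eq_sum_filter] at hfrobA
  rw [hnuc, hfrob]
  linarith [hr k, mul_le_mul_of_nonneg_left hfrobA hlam.le]
end
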